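/- Let Y be a nonempty finite type, let E be a finite-dimensional real inner product space, and let φ : Y → E be a feature map with ‖φ(y)‖ ≤ B for all y ∈ Y, where B ≥ 0. For a parameter θ ∈ E define the linear score s_θ(y) = ⟪θ, φ(y)⟫ and the softmax distribution p_θ(y) = exp(s_θ(y)) / ∑_{y'} exp(s_θ(y')). Then for any two parameters θ^s, θ^t ∈ E, the Kullback–Leibler divergence satisfies D_KL(p_{θ^s} ‖ p_{θ^t}) ≤ 2B · ‖θ^s − θ^t‖. -/

import Mathlib

open Finset
open scoped RealInnerProductSpace

/-- The exponential-family (linear) softmax distribution with parameter `θ` and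
feature map `φ`. -/
noncomputable def linearSoftmax {Y : Type*} [Fintype Y] {E : Type*}
    [NormedAddCommGroup E] [InnerProductSpace ℝ E] (φ : Y → E) (θ : E) (y : Y) : ℝ :=
  Real.exp ⟪θ, φ y⟫ / ∑ y' : Y, Real.exp ⟪θ, φ y'⟫

/-!
Write `p_θ` as the softmax of the scores `s_θ y = ⟪θ, φ y⟫`. Then
`log (p_s y / p_t y) = (s_s y - s_t y) + (log Z_t - log Z_s)` with `Z` the partition functions.
The scores differ by at most `c = B ‖θˢ - θᵗ‖` pointwise (Cauchy–Schwarz), hence so do the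
log-partition functions, and averaging the pointwise bound `2c` against `p_s` gives the claim.
-/

section Softmax

variable {Y : Type*} [Fintype Y]

noncomputable def softmax (f : Y → ℝ) (y : Y) : ℝ :=
  Real.exp (f y) / ∑ y', Real.exp (f y')

variable [Nonempty Y]

lemma sum_exp_pos (f : Y → ℝ) : 0 < ∑ y, Real.exp (f y) :=
  sum_pos (fun y _ => Real.exp_pos (f y)) univ_nonempty

lemma softmax_pos (f : Y → ℝ) (y : Y) : 0 < softmax f y :=
  div_pos (Real.exp_pos _) (sum_exp_pos f)

lemma sum_softmax (f : Y → ℝ) : ∑ y, softmax f y = 1 := by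
  simp only [softmax, ← sum_div]
  exact div_self (sum_exp_pos f).ne'

lemma log_softmax (f : Y → ℝ) (y : Y) :
    Real.log (softmax f y) = f y - Real.log (∑ y', Real.exp (f y')) := by
  rw [softmax, Real.log_div (Real.exp_ne_zero _) (sum_exp_pos f).ne', Real.log_exp]

lemma log_sum_exp_le_add {f g : Y → ℝ} {c : ℝ} (h : ∀ y, g y ≤ f y + c) :
    Real.log (∑ y, Real.exp (g y)) ≤ Real.log (∑ y, Real.exp (f y)) + c := by
  have hle : ∑ y, Real.exp (g y) ≤ ∑ y, Real.exp (f y) * Real.exp c :=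
    sum_le_sum fun y _ => (Real.exp_add _ _).symm ▸ Real.exp_le_exp.mpr (h y)
  rw [← sum_mul] at hle
  calc Real.log (∑ y, Real.exp (g y))
      ≤ Real.log ((∑ y, Real.exp (f y)) * Real.exp c) := Real.log_le_log (sum_exp_pos g) hle
    _ = Real.log (∑ y, Real.exp (f y)) + c := by
      rw [Real.log_mul (sum_exp_pos f).ne' (Real.exp_ne_zero c), Real.log_exp]

lemma klDiv_softmax_le {f g : Y → ℝ} {c : ℝ} (h : ∀ y, |f y - g y| ≤ c) :
    ∑ y, softmax f y * Real.log (softmax f y / softmax g y) ≤ 2 * c := by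
  have hlogZ : Real.log (∑ y, Real.exp (g y)) ≤ Real.log (∑ y, Real.exp (f y)) + c :=
    log_sum_exp_le_add fun y => by linarith [(abs_le.mp (h y)).1]
  calc ∑ y, softmax f y * Real.log (softmax f y / softmax g y)
      ≤ ∑ y, softmax f y * (2 * c) := by
        refine sum_le_sum fun y _ => mul_le_mul_of_nonneg_left ?_ (softmax_pos f y).le
        rw [Real.log_div (softmax_pos f y).ne' (softmax_pos g y).ne', log_softmax,
          log_softmax]
        linarith [(abs_le.mp (h y)).2]
    _ = 2 * c := by rw [← sum_mul, sum_softmax, one_mul]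

end Softmax

lemma linearSoftmax_eq_softmax {Y : Type*} [Fintype Y] {E : Type*} [NormedAddCommGroup E]
    [InnerProductSpace ℝ E] (φ : Y → E) (θ : E) :
    linearSoftmax φ θ = softmax fun y => ⟪θ, φ y⟫ :=
  rfl

theorem klDiv_linearSoftmax_le_general {Y : Type*} [Fintype Y] [Nonempty Y]
    {E : Type*} [NormedAddCommGroup E] [InnerProductSpace ℝ E]
    (φ : Y → E) (B : ℝ) (hφ : ∀ y : Y, ‖φ y‖ ≤ B) (θs θt : E) :
    ∑ y : Y, linearSoftmax φ θs y *
        Real.log (linearSoftmax φ θs y / linearSoftmax φ θt y) ≤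
      2 * B * ‖θs - θt‖ := by
  have hscore : ∀ y, |⟪θs, φ y⟫ - ⟪θt, φ y⟫| ≤ B * ‖θs - θt‖ := fun y =>
    calc |⟪θs, φ y⟫ - ⟪θt, φ y⟫| = |⟪θs - θt, φ y⟫| := by rw [inner_sub_left]
      _ ≤ ‖θs - θt‖ * ‖φ y‖ := abs_real_inner_le_norm _ _
      _ ≤ B * ‖θs - θt‖ := by rw [mul_comm]; gcongr; exact hφ y
  rw [linearSoftmax_eq_softmax, linearSoftmax_eq_softmax, mul_assoc]
  exact klDiv_softmax_le hscore

/-- If the feature map is bounded by `B`, then the KL divergence between the linear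
softmax distributions at parameters `θˢ` and `θᵗ` is at most `2 B ‖θˢ - θᵗ‖`. -/
theorem klDiv_linearSoftmax_le {Y : Type*} [Fintype Y] [Nonempty Y]
    {E : Type*} [NormedAddCommGroup E] [InnerProductSpace ℝ E] [FiniteDimensional ℝ E]
    (φ : Y → E) (B : ℝ) (hB : 0 ≤ B) (hφ : ∀ y : Y, ‖φ y‖ ≤ B) (θs θt : E) :
    ∑ y : Y, linearSoftmax φ θs y *
        Real.log (linearSoftmax φ θs y / linearSoftmax φ θt y) ≤
      2 * B * ‖θs - θt‖ :=
  klDiv_linearSoftmax_le_general φ B hφ θs θt
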